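/- Let X be a set, m a natural number, and μ : Fin m → X → X → ℝ a family of fuzzy preference relations with 0 ≤ μ j x y ≤ 1 for all j, x, y. Assume each μ j is transitive in the induced crisp sense: for all x, y, z ∈ X, if μ j x y > μ j y x and μ j y z > μ j z y then μ j x z > μ j z x; and assume each tie relation is transitive: if μ j x y = μ j y x and μ j y z = μ j z y then μ j x z = μ j z x. With μˢ j x y = max (μ j x y - μ j y x) 0 and the fuzzy strict lexicographic preference ≻_flex defined as stated, ≻_flex is transitive on X. -/

import Mathlib

/-- Fuzzy attitude of superiority (fuzzy strict part) of a fuzzy preference relation. -/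
def FuzzyStrict {X : Type*} {m : ℕ} (μ : Fin m → X → X → ℝ) (j : Fin m) (x y : X) : ℝ :=
  max (μ j x y - μ j y x) 0

/-- Fuzzy strict lexicographic preference. -/
def FLexPref {X : Type*} {m : ℕ} (μ : Fin m → X → X → ℝ) (x y : X) : Prop :=
  ∃ j : Fin m,
    (∀ q : Fin m, q < j → FuzzyStrict μ q x y = 0 ∧ FuzzyStrict μ q y x = 0) ∧
    FuzzyStrict μ j x y > 0

/-! Since the fuzzy strict part vanishes in both directions exactly on ties, `≻_flex` is the
lexicographic combination of the crisp strict parts of the `μ j`. Such a combination is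
transitive once each strict part and each tie relation is transitive and a strict step followed
or preceded by a tie stays strict; that absorption follows from the two transitivity hypotheses
by trichotomy. -/

section Lexicographic

variable {ι X : Type*} [LinearOrder ι] {P I : ι → X → X → Prop}

theorem lex_trans
    (hP : ∀ j x y z, P j x y → P j y z → P j x z)
    (hI : ∀ j x y z, I j x y → I j y z → I j x z)
    (hPI : ∀ j x y z, P j x y → I j y z → P j x z)
    (hIP : ∀ j x y z, I j x y → P j y z → P j x z)
    {x y z : X} (hxy : ∃ j, (∀ q < j, I q x y) ∧ P j x y)
    (hyz : ∃ j, (∀ q < j, I q y z) ∧ P j y z) :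
    ∃ j, (∀ q < j, I q x z) ∧ P j x z := by
  obtain ⟨j, hIxy, hPxy⟩ := hxy
  obtain ⟨k, hIyz, hPyz⟩ := hyz
  refine ⟨min j k, fun q hq => hI q x y z (hIxy q (lt_min_iff.1 hq).1)
    (hIyz q (lt_min_iff.1 hq).2), ?_⟩
  rcases lt_trichotomy j k with hjk | rfl | hkj
  · rw [min_eq_left hjk.le]
    exact hPI j x y z hPxy (hIyz j hjk)
  · rw [min_self]
    exact hP j x y z hPxy hPyz
  · rw [min_eq_right hkj.le]
    exact hIP k x y z (hIxy k hkj) hPyz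

end Lexicographic

section CrispParts

variable {X α : Type*} [LinearOrder α] {ν : X → X → α}
  (htrans : ∀ x y z, ν x y > ν y x → ν y z > ν z y → ν x z > ν z x)
  (htie : ∀ x y z, ν x y = ν y x → ν y z = ν z y → ν x z = ν z x)
include htrans htie

theorem strict_of_strict_of_tie {x y z : X} (hxy : ν x y > ν y x) (hyz : ν y z = ν z y) :
    ν x z > ν z x := by
  rcases lt_trichotomy (ν x z) (ν z x) with hlt | heq | hgt
  · exact absurd (htrans z x y hlt hxy) hyz.not_lt
  · exact absurd (htie x z y heq hyz.symm) hxy.ne'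
  · exact hgt

theorem strict_of_tie_of_strict {x y z : X} (hxy : ν x y = ν y x) (hyz : ν y z > ν z y) :
    ν x z > ν z x := by
  rcases lt_trichotomy (ν x z) (ν z x) with hlt | heq | hgt
  · exact absurd (htrans y z x hyz hlt) hxy.not_lt
  · exact absurd (htie y x z hxy.symm heq) hyz.ne'
  · exact hgt

end CrispParts

section FuzzyStrict

variable {X : Type*} {m : ℕ} (μ : Fin m → X → X → ℝ)

theorem fuzzyStrict_pos_iff (j : Fin m) (x y : X) :
    FuzzyStrict μ j x y > 0 ↔ μ j x y > μ j y x := by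
  simp [FuzzyStrict]

theorem fuzzyStrict_eq_zero_and_iff (j : Fin m) (x y : X) :
    (FuzzyStrict μ j x y = 0 ∧ FuzzyStrict μ j y x = 0) ↔ μ j x y = μ j y x := by
  simp only [FuzzyStrict, max_eq_right_iff, sub_nonpos]
  exact le_antisymm_iff.symm

theorem fLexPref_iff (x y : X) :
    FLexPref μ x y ↔ ∃ j, (∀ q < j, μ q x y = μ q y x) ∧ μ j x y > μ j y x := by
  simp only [FLexPref, fuzzyStrict_eq_zero_and_iff, fuzzyStrict_pos_iff]

end FuzzyStrict

theorem fLexPref_transitive_general {X : Type*} {m : ℕ} (μ : Fin m → X → X → ℝ)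
    (htrans : ∀ (j : Fin m) (x y z : X),
      μ j x y > μ j y x → μ j y z > μ j z y → μ j x z > μ j z x)
    (htie : ∀ (j : Fin m) (x y z : X),
      μ j x y = μ j y x → μ j y z = μ j z y → μ j x z = μ j z x) :
    ∀ x y z : X, FLexPref μ x y → FLexPref μ y z → FLexPref μ x z := by
  intro x y z hxy hyz
  rw [fLexPref_iff] at hxy hyz ⊢
  exact lex_trans htrans htie
    (fun j _ _ _ => strict_of_strict_of_tie (htrans j) (htie j))
    (fun j _ _ _ => strict_of_tie_of_strict (htrans j) (htie j)) hxy hyz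

/-- If each fuzzy preference relation is transitive in the induced crisp sense and its
tie relation is transitive, then the fuzzy strict lexicographic preference is
transitive. -/
theorem fLexPref_transitive {X : Type*} {m : ℕ} (μ : Fin m → X → X → ℝ)
    (hμ : ∀ (j : Fin m) (x y : X), 0 ≤ μ j x y ∧ μ j x y ≤ 1)
    (htrans : ∀ (j : Fin m) (x y z : X),
      μ j x y > μ j y x → μ j y z > μ j z y → μ j x z > μ j z x)
    (htie : ∀ (j : Fin m) (x y z : X),
      μ j x y = μ j y x → μ j y z = μ j z y → μ j x z = μ j z x) :
    ∀ x y z : X, FLexPref μ x y → FLexPref μ y z → FLexPref μ x z :=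
  fLexPref_transitive_general μ htrans htie
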